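/- The function K̃_ℓ(z,w) = (ℓ/((ℓ+1)·ℓ!))·⟨z,w⟩^{ℓ-1}·(⟨z,w⟩ I_d − w̄ zᵀ) is the reproducing kernel of the subspace V_ℓ = {f ∈ ℂ^d ⊗ P_ℓ : Σᵢ zᵢfᵢ = 0} of the Fischer-Fock space; i.e., K̃_ℓ(·,w)ζ ∈ V_ℓ for all w ∈ ℂ^d, ζ ∈ ℂ^d, and ⟨f, K̃_ℓ(·,w)ζ⟩_{F_ℓ} = ⟨f(w), ζ⟩ for all f ∈ V_ℓ. -/

import Mathlib

/-!
Multiplication by `X i` is the Fock adjoint of `pderiv i`, so by induction on `ℓ` and Euler's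
identity `⟨z,w⟩^ℓ` reproduces `P_ℓ`: `⟨p, ⟨·,w⟩^ℓ⟩ = ℓ! p(w)`. For `f ∈ V_{m+1}`, pairing `f` with
the gradient of `⟨z,w⟩^{m+1} ⟨z,ζ̄⟩` gives `⟨Σ zⱼ fⱼ, ⟨z,w⟩^{m+1} ⟨z,ζ̄⟩⟩ = 0`; this expresses the
cross term `Σ wⱼ ⟨fⱼ, ⟨·,w⟩^m ⟨·,ζ̄⟩⟩` through `Σ fⱼ(w) ζ̄ⱼ`, and the kernel's pairing with `f`
becomes `(m+2) m! Σ fⱼ(w) ζ̄ⱼ`, which the constant normalises.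
-/

open MvPolynomial
open Finset
open scoped ComplexConjugate

/-- The Fischer-Fock inner product on polynomials in `d` complex variables, determined by
`⟨z^α, z^β⟩_F = α! δ_{α,β}`. -/
noncomputable def fock (d : ℕ) (p q : MvPolynomial (Fin d) ℂ) : ℂ :=
  ∑ α ∈ p.support ∪ q.support,
    ((∏ i, (α i).factorial : ℕ) : ℂ) * p.coeff α * conj (q.coeff α)

namespace MvPolynomial

variable {σ R : Type*} [Fintype σ]

theorem IsHomogeneous.sum_mul_eval_pderiv [CommSemiring R] {p : MvPolynomial σ R} {n : ℕ}
    (hp : p.IsHomogeneous n) (w : σ → R) :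
    ∑ i, w i * eval w (pderiv i p) = n * eval w p := by
  simpa using congrArg (eval w) hp.sum_X_mul_pderiv

theorem isHomogeneous_sum_C_mul_X [CommSemiring R] (v : σ → R) :
    (∑ k, C (v k) * X k : MvPolynomial σ R).IsHomogeneous 1 :=
  IsHomogeneous.sum _ _ _ fun k _ => isHomogeneous_C_mul_X (v k) k

theorem pderiv_sum_C_mul_X [CommSemiring R] (v : σ → R) (j : σ) :
    pderiv j (∑ k, C (v k) * X k : MvPolynomial σ R) = C (v j) := by
  classical
  simp [pderiv_X, Pi.single_apply]

theorem pderiv_sum_C_mul_X_pow_succ_mul [CommSemiring R] (v u : σ → R) (m : ℕ) (j : σ) :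
    pderiv j ((∑ k, C (v k) * X k) ^ (m + 1) * ∑ k, C (u k) * X k : MvPolynomial σ R)
      = C ((m + 1 : R) * v j) * ((∑ k, C (v k) * X k) ^ m * ∑ k, C (u k) * X k)
        + C (u j) * (∑ k, C (v k) * X k) ^ (m + 1) := by
  rw [pderiv_mul, pderiv_pow, pderiv_sum_C_mul_X, pderiv_sum_C_mul_X, Nat.add_sub_cancel, map_mul]
  simp only [map_add, map_one, map_natCast, Nat.cast_add, Nat.cast_one]
  ring

end MvPolynomial

theorem Finsupp.prod_factorial_add_single {σ : Type*} [Fintype σ] (β : σ →₀ ℕ) (i : σ) :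
    ∏ j, ((β + single i 1 : σ →₀ ℕ) j).factorial = (β i + 1) * ∏ j, (β j).factorial := by
  classical
  have h : ∀ j, ((β + single i 1 : σ →₀ ℕ) j).factorial
      = (β j).factorial * if j = i then β i + 1 else 1 := by
    intro j
    by_cases hj : j = i
    · subst hj; simp [Nat.factorial_succ, mul_comm]
    · simp [hj]
  rw [Finset.prod_congr rfl fun j _ => h j, Finset.prod_mul_distrib, Finset.prod_ite_eq',
    if_pos (mem_univ i), mul_comm]

variable {d : ℕ}

theorem fock_eq_sum_of_support_subset_left {p : MvPolynomial (Fin d) ℂ}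
    (q : MvPolynomial (Fin d) ℂ) {t : Finset (Fin d →₀ ℕ)} (h : p.support ⊆ t) :
    fock d p q = ∑ α ∈ t, ((∏ i, (α i).factorial : ℕ) : ℂ) * p.coeff α * conj (q.coeff α) := by
  rw [fock, ← sum_subset subset_union_left, sum_subset h] <;>
    intro α _ hα <;> simp [notMem_support_iff.mp hα]

theorem fock_eq_sum_of_support_subset_right (p : MvPolynomial (Fin d) ℂ)
    {q : MvPolynomial (Fin d) ℂ} {t : Finset (Fin d →₀ ℕ)} (h : q.support ⊆ t) :
    fock d p q = ∑ α ∈ t, ((∏ i, (α i).factorial : ℕ) : ℂ) * p.coeff α * conj (q.coeff α) := by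
  rw [fock, ← sum_subset subset_union_right, sum_subset h] <;>
    intro α _ hα <;> simp [notMem_support_iff.mp hα]

theorem fock_conj_symm (p q : MvPolynomial (Fin d) ℂ) : conj (fock d q p) = fock d p q := by
  rw [fock, fock, union_comm, map_sum]
  refine sum_congr rfl fun α _ => ?_
  simp only [map_mul, Complex.conj_conj, map_natCast]
  ring

theorem fock_zero_left (q : MvPolynomial (Fin d) ℂ) : fock d 0 q = 0 := by
  simp [fock_eq_sum_of_support_subset_left q (subset_refl _)]

theorem fock_add_right (p q r : MvPolynomial (Fin d) ℂ) :
    fock d p (q + r) = fock d p q + fock d p r := by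
  simp only [fock_eq_sum_of_support_subset_left _ (subset_refl p.support), coeff_add, map_add,
    mul_add, sum_add_distrib]

theorem fock_sub_right (p q r : MvPolynomial (Fin d) ℂ) :
    fock d p (q - r) = fock d p q - fock d p r := by
  simp only [fock_eq_sum_of_support_subset_left _ (subset_refl p.support), coeff_sub, map_sub,
    mul_sub, sum_sub_distrib]

theorem fock_C_mul_right (p q : MvPolynomial (Fin d) ℂ) (a : ℂ) :
    fock d p (C a * q) = conj a * fock d p q := by
  simp only [fock_eq_sum_of_support_subset_left _ (subset_refl p.support), coeff_C_mul, map_mul,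
    mul_sum]
  exact sum_congr rfl fun α _ => by ring

theorem fock_sum_left {ι : Type*} (s : Finset ι) (p : ι → MvPolynomial (Fin d) ℂ)
    (q : MvPolynomial (Fin d) ℂ) :
    fock d (∑ i ∈ s, p i) q = ∑ i ∈ s, fock d (p i) q := by
  simp only [fock_eq_sum_of_support_subset_right _ (subset_refl q.support), coeff_sum, sum_mul,
    mul_sum]
  exact sum_comm

theorem fock_sum_right {ι : Type*} (p : MvPolynomial (Fin d) ℂ) (s : Finset ι)
    (q : ι → MvPolynomial (Fin d) ℂ) :
    fock d p (∑ i ∈ s, q i) = ∑ i ∈ s, fock d p (q i) := by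
  simp only [fock_eq_sum_of_support_subset_left _ (subset_refl p.support), coeff_sum, map_sum,
    mul_sum]
  exact sum_comm

theorem fock_one_right (p : MvPolynomial (Fin d) ℂ) : fock d p 1 = p.coeff 0 := by
  rw [fock_eq_sum_of_support_subset_right p support_one.subset]
  simp

theorem fock_X_mul_left (i : Fin d) (p q : MvPolynomial (Fin d) ℂ) :
    fock d (X i * p) q = fock d p (pderiv i q) := by
  rw [fock_eq_sum_of_support_subset_left q (support_X_mul i p).subset, sum_map,
    fock_eq_sum_of_support_subset_left _ (subset_refl p.support)]
  refine sum_congr rfl fun β _ => ?_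
  rw [addLeftEmbedding_apply, coeff_X_mul, add_comm, Finsupp.prod_factorial_add_single,
    coeff_pderiv, map_mul, map_add, map_one, map_natCast]
  push_cast
  ring

theorem fock_X_mul_right (i : Fin d) (p q : MvPolynomial (Fin d) ℂ) :
    fock d p (X i * q) = fock d (pderiv i p) q := by
  rw [← fock_conj_symm, fock_X_mul_left, fock_conj_symm]

theorem fock_sum_conj_C_mul_X_pow (w : Fin d → ℂ) {ℓ : ℕ} {p : MvPolynomial (Fin d) ℂ}
    (hp : p.IsHomogeneous ℓ) :
    fock d p ((∑ k, C (conj (w k)) * X k) ^ ℓ) = ℓ.factorial * eval w p := by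
  induction ℓ generalizing p with
  | zero =>
    have hC : p = C (p.coeff 0) :=
      totalDegree_eq_zero_iff_eq_C.mp ((totalDegree_zero_iff_isHomogeneous _).mpr hp)
    rw [pow_zero, fock_one_right, hC]
    simp
  | succ ℓ ih =>
    rw [pow_succ', sum_mul, fock_sum_right]
    calc ∑ k, fock d p (C (conj (w k)) * X k * (∑ k, C (conj (w k)) * X k) ^ ℓ)
        = ∑ k, ℓ.factorial * (w k * eval w (pderiv k p)) := sum_congr rfl fun k _ => by
          rw [mul_assoc, fock_C_mul_right, Complex.conj_conj, fock_X_mul_right,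
            ih (by simpa using hp.pderiv)]
          ring
      _ = (ℓ + 1).factorial * eval w p := by
          rw [← mul_sum, hp.sum_mul_eval_pderiv, Nat.factorial_succ]
          push_cast
          ring

theorem sum_fock_pderiv_eq_zero {f : Fin d → MvPolynomial (Fin d) ℂ} (hf : ∑ j, X j * f j = 0)
    (g : MvPolynomial (Fin d) ℂ) : ∑ j, fock d (f j) (pderiv j g) = 0 := by
  simp_rw [← fock_X_mul_left, ← fock_sum_left, hf, fock_zero_left]

-- `K̃_{m+1}(·,w)ζ` without its normalising constant.
noncomputable def fockKernel (m : ℕ) (w ζ : Fin d → ℂ) (j : Fin d) : MvPolynomial (Fin d) ℂ :=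
  (∑ k, C (conj (w k)) * X k) ^ m *
    ((∑ k, C (conj (w k)) * X k) * C (ζ j) - C (conj (w j)) * ∑ i, C (ζ i) * X i)

section fockKernel

variable (m : ℕ) (w ζ : Fin d → ℂ)

theorem isHomogeneous_fockKernel (j : Fin d) : (fockKernel m w ζ j).IsHomogeneous (m + 1) := by
  have hS := isHomogeneous_sum_C_mul_X fun k => conj (w k)
  have h := (hS.pow m).mul
    ((hS.mul (isHomogeneous_C _ (ζ j))).sub
      ((isHomogeneous_C _ (conj (w j))).mul (isHomogeneous_sum_C_mul_X ζ)))
  simpa [fockKernel, add_comm] using h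

theorem sum_X_mul_fockKernel : ∑ j, X j * fockKernel m w ζ j = 0 := by
  set S : MvPolynomial (Fin d) ℂ := ∑ k, C (conj (w k)) * X k
  set T : MvPolynomial (Fin d) ℂ := ∑ k, C (ζ k) * X k
  have hj : ∀ j, X j * fockKernel m w ζ j
      = S ^ m * (S * (C (ζ j) * X j) - T * (C (conj (w j)) * X j)) :=
    fun j => by rw [fockKernel]; ring
  rw [sum_congr rfl fun j _ => hj j, ← mul_sum, sum_sub_distrib, ← mul_sum, ← mul_sum]
  ring

variable {m} {f : Fin d → MvPolynomial (Fin d) ℂ}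

theorem sum_mul_fock_pow_mul (hf : ∀ j, (f j).IsHomogeneous (m + 1)) (hX : ∑ j, X j * f j = 0) :
    ∑ j, w j * fock d (f j) ((∑ k, C (conj (w k)) * X k) ^ m * ∑ k, C (ζ k) * X k)
      = -m.factorial * ∑ j, eval w (f j) * conj (ζ j) := by
  have h0 := sum_fock_pderiv_eq_zero hX
    ((∑ k, C (conj (w k)) * X k) ^ (m + 1) * ∑ k, C (ζ k) * X k)
  have key : (m + 1 : ℂ) * (∑ j, w j * fock d (f j)
      ((∑ k, C (conj (w k)) * X k) ^ m * ∑ k, C (ζ k) * X k)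
      + m.factorial * ∑ j, eval w (f j) * conj (ζ j)) = 0 := by
    rw [← h0, mul_add, mul_sum _ _ ((m : ℂ) + 1), mul_sum _ _ (m.factorial : ℂ),
      mul_sum _ _ ((m : ℂ) + 1), ← sum_add_distrib]
    refine sum_congr rfl fun j _ => ?_
    rw [pderiv_sum_C_mul_X_pow_succ_mul, fock_add_right, fock_C_mul_right, fock_C_mul_right,
      fock_sum_conj_C_mul_X_pow w (hf j), map_mul, Complex.conj_conj, map_add, map_one,
      map_natCast, Nat.factorial_succ]
    push_cast
    ring
  linear_combination (mul_eq_zero.mp key).resolve_left (Nat.cast_add_one_ne_zero m)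

theorem sum_fock_fockKernel (hf : ∀ j, (f j).IsHomogeneous (m + 1)) (hX : ∑ j, X j * f j = 0) :
    ∑ j, fock d (f j) (fockKernel m w ζ j)
      = (m + 2) * m.factorial * ∑ j, eval w (f j) * conj (ζ j) := by
  have hj : ∀ j, fock d (f j) (fockKernel m w ζ j)
      = (m + 1).factorial * (eval w (f j) * conj (ζ j))
        - w j * fock d (f j) ((∑ k, C (conj (w k)) * X k) ^ m * ∑ k, C (ζ k) * X k) := fun j => by
    rw [fockKernel, mul_sub, ← mul_assoc, mul_comm _ (C (ζ j)), ← pow_succ, mul_left_comm,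
      fock_sub_right, fock_C_mul_right, fock_C_mul_right, fock_sum_conj_C_mul_X_pow w (hf j),
      Complex.conj_conj]
    ring
  rw [sum_congr rfl fun j _ => hj j, sum_sub_distrib, ← mul_sum, sum_mul_fock_pow_mul w ζ hf hX,
    Nat.factorial_succ]
  push_cast
  ring

end fockKernel

/-- `K̃_ℓ(z,w) = (ℓ/((ℓ+1)ℓ!)) ⟨z,w⟩^{ℓ-1} (⟨z,w⟩ I_d − w̄ zᵀ)` (here `ℓ = m+1`)
is the reproducing kernel of `V_ℓ = {f ∈ ℂ^d ⊗ P_ℓ : Σᵢ zᵢ fᵢ = 0}`: each `K̃_ℓ(·,w)ζ`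
lies in `V_ℓ`, and `⟨f, K̃_ℓ(·,w)ζ⟩ = ⟨f(w), ζ⟩` for all `f ∈ V_ℓ`. -/
theorem stmt9 (d m : ℕ) (w ζ : Fin d → ℂ) :
    let S : MvPolynomial (Fin d) ℂ := ∑ k, C (conj (w k)) * X k
    let coef : ℂ := ((m + 1 : ℕ) : ℂ) / (((m + 2 : ℕ) : ℂ) * ((m + 1).factorial : ℂ))
    let comp : Fin d → MvPolynomial (Fin d) ℂ := fun j =>
      C coef * S ^ m * (S * C (ζ j) - C (conj (w j)) * ∑ i, C (ζ i) * X i)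
    (∀ j, (comp j).IsHomogeneous (m + 1)) ∧
    (∑ j, X j * comp j) = 0 ∧
    ∀ f : Fin d → MvPolynomial (Fin d) ℂ, (∀ j, (f j).IsHomogeneous (m + 1)) →
      (∑ j, X j * f j) = 0 →
      (∑ j, fock d (f j) (comp j)) = ∑ j, eval w (f j) * conj (ζ j) := by
  intro S coef comp
  have hcomp : ∀ j, comp j = C coef * fockKernel m w ζ j := fun j => mul_assoc _ _ _
  refine ⟨fun j => ?_, ?_, fun f hf hX => ?_⟩
  · simpa [hcomp] using (isHomogeneous_C _ coef).mul (isHomogeneous_fockKernel m w ζ j)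
  · simp_rw [hcomp, mul_left_comm (X _), ← mul_sum, sum_X_mul_fockKernel, mul_zero]
  · have hne : ((m : ℂ) + 2) * m.factorial ≠ 0 := by norm_cast; positivity
    have hcoef : conj coef = (((m : ℂ) + 2) * m.factorial)⁻¹ := by
      simp only [coef, map_div₀, map_mul, map_natCast, Nat.factorial_succ]
      push_cast
      field_simp
    simp_rw [hcomp, fock_C_mul_right, ← mul_sum, sum_fock_fockKernel w ζ hf hX, hcoef,
      inv_mul_cancel_left₀ hne]
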